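/- Let F: ℕ → {−1,1}, θ = 2π Σ_{i=0}^∞ F(i)/8^{i+2}, and φ_j = 8^{j+1}θ + π/4 (mod 2π). If F(j) = 1 then sin²(φ_j) ≥ 0.98, and if F(j) = −1 then cos²(φ_j) ≥ 0.98. -/

import Mathlib

/-!
Multiplying `θ` by `8 ^ (j + 1)` shifts its octal expansion:
`8 ^ (j + 1) * θ = 2π m + F j * π / 4 + R` with `m` an integer and `R` (the tail of the expansion)
bounded by `2π / 56 = π / 28`. So `φ` lies within `π / 28` of `π / 2` or `0` modulo `2π`, and
`cos x ≥ 1 - x ^ 2 / 2` gives `cos R ^ 2 ≥ 0.98`.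
-/

open Real

/-- The base-`b` expansion `0.a₀a₁a₂…`; the digits may be arbitrary reals. -/
noncomputable def digitSum (b : ℝ) (a : ℕ → ℝ) : ℝ := ∑' i, a i / b ^ (i + 1)

section digitSum

variable {b : ℝ} {a : ℕ → ℝ}

lemma abs_div_pow_succ_le (hb : 1 < b) (ha : ∀ i, |a i| ≤ 1) (i : ℕ) :
    |a i / b ^ (i + 1)| ≤ (1 / b) ^ (i + 1) := by
  have hb0 : 0 < b := by linarith
  rw [abs_div, abs_of_pos (pow_pos hb0 _), one_div_pow]
  exact div_le_div_of_nonneg_right (ha i) (pow_pos hb0 _).le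

lemma summable_one_div_pow_succ (hb : 1 < b) : Summable fun i : ℕ => (1 / b) ^ (i + 1) :=
  (summable_nat_add_iff 1).mpr <|
    summable_geometric_of_lt_one (by positivity) ((div_lt_one (by linarith)).mpr hb)

lemma summable_div_pow_succ (hb : 1 < b) (ha : ∀ i, |a i| ≤ 1) :
    Summable fun i => a i / b ^ (i + 1) :=
  Summable.of_norm_bounded (summable_one_div_pow_succ hb) (abs_div_pow_succ_le hb ha)

lemma abs_digitSum_le (hb : 1 < b) (ha : ∀ i, |a i| ≤ 1) : |digitSum b a| ≤ 1 / (b - 1) := by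
  have hgeom : ∑' i : ℕ, (1 / b) ^ (i + 1) = 1 / (b - 1) := by
    simp_rw [pow_succ]
    rw [tsum_mul_right, tsum_geometric_of_lt_one (by positivity) ((div_lt_one (by linarith)).mpr hb)]
    field_simp
  calc |digitSum b a| = ‖∑' i, a i / b ^ (i + 1)‖ := rfl
    _ ≤ ∑' i : ℕ, (1 / b) ^ (i + 1) :=
        tsum_of_norm_bounded (summable_one_div_pow_succ hb).hasSum (abs_div_pow_succ_le hb ha)
    _ = 1 / (b - 1) := hgeom

lemma mul_digitSum (hb : 1 < b) (ha : ∀ i, |a i| ≤ 1) :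
    b * digitSum b a = a 0 + digitSum b (fun i => a (i + 1)) := by
  rw [digitSum, (summable_div_pow_succ hb ha).tsum_eq_zero_add, digitSum, mul_add,
    ← tsum_mul_left]
  have hb0 : b ≠ 0 := by positivity
  congr 1
  · simp only [zero_add, pow_one]; field_simp
  · congr 1; funext i; rw [pow_succ _ (i + 1)]; field_simp

lemma exists_int_pow_mul_digitSum {b : ℕ} (hb : 1 < b) (ha : ∀ i, |a i| ≤ 1)
    (hint : ∀ i, ∃ z : ℤ, a i = z) (j : ℕ) :
    ∃ m : ℤ, (b : ℝ) ^ j * digitSum b a = m + digitSum b (fun i => a (i + j)) := by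
  have hb' : (1 : ℝ) < b := by exact_mod_cast hb
  induction j with
  | zero => exact ⟨0, by simp⟩
  | succ j ih =>
    obtain ⟨m, hm⟩ := ih
    obtain ⟨z, hz⟩ := hint j
    refine ⟨b * m + z, ?_⟩
    rw [pow_succ, mul_comm _ (b : ℝ), mul_assoc, hm, mul_add, mul_digitSum hb' fun i => ha _]
    simp only [hz, zero_add, Int.cast_add, Int.cast_mul, Int.cast_natCast]
    simp_rw [add_assoc, add_comm 1 j]

end digitSum

lemma sq_cos_ge_of_abs_le {x : ℝ} (hx : |x| ≤ π / 28) : 0.98 ≤ cos x ^ 2 := by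
  have hcos : 0.99 ≤ cos x := by
    have hsq : x ^ 2 ≤ (π / 28) ^ 2 := sq_le_sq' (abs_le.mp hx).1 (abs_le.mp hx).2
    nlinarith [one_sub_sq_div_two_le_cos (x := x), pi_lt_d2, pi_pos]
  nlinarith

theorem stmt_15 (F : ℕ → ℝ) (hF : ∀ i, F i = 1 ∨ F i = -1) (j : ℕ)
    (θ φ : ℝ) (hθ : θ = 2 * π * ∑' i : ℕ, F i / 8 ^ (i + 2))
    (hφ : φ = 8 ^ (j + 1) * θ + π / 4) :
    (F j = 1 → Real.sin φ ^ 2 ≥ 0.98) ∧ (F j = -1 → Real.cos φ ^ 2 ≥ 0.98) := by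
  have hbd : ∀ i, |F i| ≤ 1 := fun i => by rcases hF i with h | h <;> simp [h]
  have hint : ∀ i, ∃ z : ℤ, F i = z := fun i => by
    rcases hF i with h | h
    exacts [⟨1, by simp [h]⟩, ⟨-1, by simp [h]⟩]
  have hθ' : θ = 2 * π * digitSum 8 F / 8 := by
    simp_rw [hθ, digitSum, pow_succ _ (_ + 1), ← div_div, tsum_div_const]
    ring
  obtain ⟨m, hm⟩ := exists_int_pow_mul_digitSum (b := 8) (by norm_num) hbd hint j
  set R := π / 4 * digitSum 8 (fun i => F (i + j + 1))
  have hR : |R| ≤ π / 28 := by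
    have := abs_digitSum_le (b := 8) (by norm_num) fun i => hbd (i + j + 1)
    rw [abs_mul, abs_of_pos (by positivity)]
    nlinarith [pi_pos]
  have hdecomp : φ = (F j + 1) * (π / 4) + R + m * (2 * π) := by
    have := mul_digitSum (b := 8) (by norm_num) fun i => hbd (i + j)
    simp only [zero_add, add_right_comm _ 1 j] at this
    rw [hφ, hθ', pow_succ]
    linear_combination (π / 4) * this + (2 * π) * hm
  constructor
  · intro h
    rw [hdecomp, h, sin_add_int_mul_two_pi, show (1 + 1) * (π / 4) + R = R + π / 2 by ring,
      sin_add_pi_div_two]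
    exact sq_cos_ge_of_abs_le hR
  · intro h
    rw [hdecomp, h, cos_add_int_mul_two_pi, show (-1 + 1) * (π / 4) + R = R by ring]
    exact sq_cos_ge_of_abs_le hR
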